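/- arXiv:1810.11837 — 2 statements merged into one kernel-verified Lean document; each statement's English description precedes it below -/
import Mathlib

section
/- Let n ≥ 1 and let the symmetric group S_n act on ℂ^n by permuting the coordinates. Then the quotient of the unit sphere S^{2n-1} ⊆ ℂ^n by this action is homeomorphic to S^{2n-1}. -/
open Finset Polynomial

private lemma map_univ_perm {n : ℕ} {β : Type*} (f : Fin n → β) (σ : Equiv.Perm (Fin n)) :
    Multiset.map (fun i => f (σ i)) Finset.univ.val = Multiset.map f Finset.univ.val := by
  have h1 : Multiset.map (⇑σ) Finset.univ.val = Finset.univ.val := by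
    have := Finset.map_univ_equiv σ
    calc Multiset.map (⇑σ) Finset.univ.val = (Finset.univ.map σ.toEmbedding).val := rfl
      _ = Finset.univ.val := by rw [this]
  calc Multiset.map (fun i => f (σ i)) Finset.univ.val
      = Multiset.map f (Multiset.map (⇑σ) Finset.univ.val) := by rw [Multiset.map_map]; rfl
    _ = Multiset.map f Finset.univ.val := by rw [h1]

private lemma map_univ_succ {n : ℕ} {β : Type*} (f : Fin (n + 1) → β) :
    Multiset.map f Finset.univ.val = f 0 ::ₘ Multiset.map (f ∘ Fin.succ) Finset.univ.val := by
  rw [Fin.univ_val_map, Fin.univ_val_map, List.ofFn_succ]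
  rfl

private lemma exists_perm_of_map_eq : ∀ {n : ℕ} {β : Type} [DecidableEq β] (f g : Fin n → β),
    Multiset.map f Finset.univ.val = Multiset.map g Finset.univ.val →
    ∃ σ : Equiv.Perm (Fin n), ∀ i, g i = f (σ i) := by
  intro n
  induction n with
  | zero => intro β _ f g _; exact ⟨Equiv.refl _, fun i => i.elim0⟩
  | succ n ih =>
    intro β _ f g h
    have hb : g 0 ∈ Multiset.map f Finset.univ.val := by
      rw [h]
      exact Multiset.mem_map_of_mem g (Finset.mem_univ_val 0)
    obtain ⟨j, -, hj⟩ := Multiset.mem_map.1 hb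
    set f₁ : Fin (n + 1) → β := fun i => f (Equiv.swap j 0 i) with hf₁
    have hmap : Multiset.map f₁ Finset.univ.val = Multiset.map f Finset.univ.val :=
      map_univ_perm f (Equiv.swap j 0)
    have hf₁0 : f₁ 0 = g 0 := by
      simp only [hf₁, Equiv.swap_apply_right]
      exact hj
    have h2 : Multiset.map (f₁ ∘ Fin.succ) Finset.univ.val
        = Multiset.map (g ∘ Fin.succ) Finset.univ.val := by
      have := (map_univ_succ f₁).symm.trans (hmap.trans (h.trans (map_univ_succ g)))
      rw [hf₁0] at this
      exact (Multiset.cons_inj_right _).1 this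
    obtain ⟨τ, hτ⟩ := ih (f₁ ∘ Fin.succ) (g ∘ Fin.succ) h2
    refine ⟨(Equiv.Perm.decomposeFin.symm (0, τ)).trans (Equiv.swap j 0), fun i => ?_⟩
    induction i using Fin.cases with
    | zero =>
      simp only [Equiv.trans_apply, Equiv.Perm.decomposeFin_symm_apply_zero,
        Equiv.swap_apply_right]
      exact hj.symm
    | succ i =>
      have := hτ i
      simp only [Function.comp_apply, hf₁] at this
      simp only [Equiv.trans_apply, Equiv.Perm.decomposeFin_symm_apply_succ,
        Equiv.swap_self, Equiv.refl_apply]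
      exact this

open Finset Polynomial

private noncomputable def esF (n : ℕ) (z : Fin n → ℂ) (k : Fin n) : ℂ :=
  ∑ t ∈ Finset.univ.powersetCard (k.1 + 1), ∏ i ∈ t, z i

private lemma esF_eq_esymm (n : ℕ) (z : Fin n → ℂ) (k : Fin n) :
    esF n z k = (Multiset.map z Finset.univ.val).esymm (k.1 + 1) :=
  (Finset.esymm_map_val z Finset.univ (k.1 + 1)).symm

private lemma map_eq_of_esF_eq {n : ℕ} {z w : Fin n → ℂ}
    (h : ∀ k : Fin n, esF n z k = esF n w k) :
    Multiset.map z Finset.univ.val = Multiset.map w Finset.univ.val := by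
  set s := Multiset.map z Finset.univ.val with hs
  set t := Multiset.map w Finset.univ.val with ht
  have hcs : Multiset.card s = n := by simp [hs]
  have hct : Multiset.card t = n := by simp [ht]
  have hesymm : ∀ m : ℕ, s.esymm m = t.esymm m := by
    intro m
    rcases Nat.eq_zero_or_pos m with hm | hm
    · subst hm; simp [Multiset.esymm]
    rcases le_or_gt m n with hmn | hmn
    · have hk : m - 1 < n := by omega
      have := h ⟨m - 1, hk⟩
      rw [esF_eq_esymm, esF_eq_esymm] at this
      rw [← hs, ← ht] at this
      have hm1 : m - 1 + 1 = m := by omega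
      rw [hm1] at this
      exact this
    · rw [Multiset.esymm, Multiset.esymm, Multiset.powersetCard_eq_empty, Multiset.powersetCard_eq_empty]
      · rw [hct]; exact hmn
      · rw [hcs]; exact hmn
  have hpoly : (s.map fun a => X - C a).prod = (t.map fun a => X - C a).prod := by
    ext m
    rcases le_or_gt m n with hmn | hmn
    · rw [Multiset.prod_X_sub_C_coeff s (by rw [hcs]; exact hmn),
        Multiset.prod_X_sub_C_coeff t (by rw [hct]; exact hmn), hcs, hct, hesymm]
    · rw [Polynomial.coeff_eq_zero_of_natDegree_lt, Polynomial.coeff_eq_zero_of_natDegree_lt]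
      · rw [Polynomial.natDegree_multiset_prod_X_sub_C_eq_card, hct]; exact hmn
      · rw [Polynomial.natDegree_multiset_prod_X_sub_C_eq_card, hcs]; exact hmn
  have := Polynomial.roots_multiset_prod_X_sub_C s
  rw [hpoly, Polynomial.roots_multiset_prod_X_sub_C t] at this
  exact this.symm

private lemma exists_perm_of_esF_eq {n : ℕ} {z w : Fin n → ℂ}
    (h : ∀ k : Fin n, esF n z k = esF n w k) :
    ∃ σ : Equiv.Perm (Fin n), ∀ i, w i = z (σ i) := by
  classical
  exact exists_perm_of_map_eq z w (map_eq_of_esF_eq h)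

open Finset

private noncomputable def Nfun (n : ℕ) (c : Fin n → ℂ) (t : ℝ) : ℝ :=
  ∑ k : Fin n, t ^ (2 * (k.1 + 1)) * ‖c k‖ ^ 2

private lemma Nfun_zero (n : ℕ) (c : Fin n → ℂ) : Nfun n c 0 = 0 := by
  unfold Nfun
  refine Finset.sum_eq_zero fun k _ => ?_
  rw [zero_pow (by omega), zero_mul]

private lemma Nfun_continuous_t (n : ℕ) (c : Fin n → ℂ) : Continuous (Nfun n c) := by
  unfold Nfun
  exact continuous_finset_sum _ fun k _ => ((continuous_pow _).mul continuous_const)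

private lemma Nfun_continuous_c (n : ℕ) (t : ℝ) : Continuous (fun c : Fin n → ℂ => Nfun n c t) := by
  unfold Nfun
  refine continuous_finset_sum _ fun k _ => ?_
  exact continuous_const.mul (((continuous_apply k).norm).pow 2)

private lemma Nfun_monotoneOn (n : ℕ) (c : Fin n → ℂ) :
    MonotoneOn (Nfun n c) (Set.Ici 0) := by
  intro a ha b hb hab
  refine Finset.sum_le_sum fun k _ => ?_
  exact mul_le_mul_of_nonneg_right (pow_le_pow_left₀ ha hab _) (sq_nonneg _)

private lemma Nfun_strictMonoOn {n : ℕ} {c : Fin n → ℂ} (hc : c ≠ 0) :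
    StrictMonoOn (Nfun n c) (Set.Ici 0) := by
  intro a ha b hb hab
  obtain ⟨k0, hk0⟩ : ∃ k, c k ≠ 0 := by
    by_contra hall
    push_neg at hall
    exact hc (funext hall)
  refine Finset.sum_lt_sum (fun k _ => mul_le_mul_of_nonneg_right
    (pow_le_pow_left₀ ha hab.le _) (sq_nonneg _)) ⟨k0, Finset.mem_univ k0, ?_⟩
  have hnorm : (0:ℝ) < ‖c k0‖ ^ 2 := pow_pos (norm_pos_iff.2 hk0) 2
  refine mul_lt_mul_of_pos_right ?_ hnorm
  exact pow_lt_pow_left₀ hab ha (by omega)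

private lemma Nfun_exists {n : ℕ} {c : Fin n → ℂ} (hc : c ≠ 0) :
    ∃ t : ℝ, 0 < t ∧ Nfun n c t = 1 := by
  obtain ⟨k0, hk0⟩ : ∃ k, c k ≠ 0 := by
    by_contra hall
    push_neg at hall
    exact hc (funext hall)
  have hnorm : (0:ℝ) < ‖c k0‖ ^ 2 := pow_pos (norm_pos_iff.2 hk0) 2
  set M : ℝ := max 1 (1 / ‖c k0‖) with hM
  have hM1 : 1 ≤ M := le_max_left _ _
  have hM0 : 0 ≤ M := by linarith
  have hMN : 1 ≤ Nfun n c M := by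
    have h1 : M ^ (2 * (k0.1 + 1)) * ‖c k0‖ ^ 2 ≤ Nfun n c M := by
      rw [Nfun]
      exact Finset.single_le_sum (f := fun k : Fin n => M ^ (2 * (k.1 + 1)) * ‖c k‖ ^ 2)
        (fun k _ => by positivity) (Finset.mem_univ k0)
    have h2 : (1:ℝ) ≤ M ^ (2 * (k0.1 + 1)) * ‖c k0‖ ^ 2 := by
      have hMc : 1 / ‖c k0‖ ≤ M := le_max_right _ _
      have hc0 : (0:ℝ) < ‖c k0‖ := norm_pos_iff.2 hk0
      have h3 : 1 / ‖c k0‖ ^ 2 ≤ M ^ 2 := by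
        calc 1 / ‖c k0‖ ^ 2 = (1 / ‖c k0‖) ^ 2 := by rw [div_pow, one_pow]
          _ ≤ M ^ 2 := pow_le_pow_left₀ (by positivity) hMc 2
      have h4 : M ^ 2 ≤ M ^ (2 * (k0.1 + 1)) := pow_le_pow_right₀ hM1 (by omega)
      calc (1:ℝ) = (1 / ‖c k0‖ ^ 2) * ‖c k0‖ ^ 2 := by
            rw [one_div, inv_mul_cancel₀ (ne_of_gt hnorm)]
        _ ≤ M ^ (2 * (k0.1 + 1)) * ‖c k0‖ ^ 2 :=
            mul_le_mul_of_nonneg_right (h3.trans h4) (sq_nonneg _)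
    linarith
  have hIcc : (1:ℝ) ∈ Set.Icc (Nfun n c 0) (Nfun n c M) := by
    rw [Nfun_zero]; exact ⟨zero_le_one, hMN⟩
  obtain ⟨t, ht, hNt⟩ := intermediate_value_Icc hM0 (Nfun_continuous_t n c).continuousOn hIcc
  refine ⟨t, ?_, hNt⟩
  rcases eq_or_lt_of_le ht.1 with h | h
  · exfalso; rw [← h, Nfun_zero] at hNt; norm_num at hNt
  · exact h

open scoped Classical in
private noncomputable def Tfun (n : ℕ) (c : Fin n → ℂ) : ℝ :=
  if h : ∃ t : ℝ, 0 < t ∧ Nfun n c t = 1 then h.choose else 1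

private lemma Tfun_pos {n : ℕ} {c : Fin n → ℂ} (hc : c ≠ 0) :
    0 < Tfun n c ∧ Nfun n c (Tfun n c) = 1 := by
  unfold Tfun
  rw [dif_pos (Nfun_exists hc)]
  exact (Nfun_exists hc).choose_spec

private lemma Tfun_unique {n : ℕ} {c : Fin n → ℂ} (hc : c ≠ 0) {s : ℝ}
    (hs : 0 < s) (hNs : Nfun n c s = 1) : Tfun n c = s := by
  obtain ⟨hT, hNT⟩ := Tfun_pos hc
  exact (Nfun_strictMonoOn hc).injOn (Set.mem_Ici.2 hT.le) (Set.mem_Ici.2 hs.le)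
    (hNT.trans hNs.symm)

private lemma Tfun_continuousAt {n : ℕ} {c₀ : Fin n → ℂ} (hc : c₀ ≠ 0) :
    ContinuousAt (Tfun n) c₀ := by
  have hopen : ∀ᶠ c in nhds c₀, c ≠ 0 := isOpen_ne.eventually_mem hc
  obtain ⟨hT0, hNT0⟩ := Tfun_pos hc
  rw [ContinuousAt, tendsto_order]
  constructor
  · intro a ha
    rcases le_or_gt a 0 with h0 | h0
    · filter_upwards [hopen] with c hc0
      exact lt_of_le_of_lt h0 (Tfun_pos hc0).1
    · have hNa : Nfun n c₀ a < 1 := by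
        rw [← hNT0]
        exact Nfun_strictMonoOn hc (Set.mem_Ici.2 h0.le) (Set.mem_Ici.2 hT0.le) ha
      have hev : ∀ᶠ c in nhds c₀, Nfun n c a < 1 :=
        (Nfun_continuous_c n a).continuousAt.eventually_lt continuousAt_const hNa
      filter_upwards [hopen, hev] with c hc0 hca
      by_contra hle
      push_neg at hle
      obtain ⟨hTc, hNTc⟩ := Tfun_pos hc0
      have := Nfun_monotoneOn n c (Set.mem_Ici.2 hTc.le) (Set.mem_Ici.2 (hTc.le.trans hle)) hle
      rw [hNTc] at this
      linarith
  · intro b hb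
    have hNb : 1 < Nfun n c₀ b := by
      rw [← hNT0]
      exact Nfun_strictMonoOn hc (Set.mem_Ici.2 hT0.le) (Set.mem_Ici.2 (hT0.le.trans hb.le)) hb
    have hev : ∀ᶠ c in nhds c₀, 1 < Nfun n c b :=
      continuousAt_const.eventually_lt (Nfun_continuous_c n b).continuousAt hNb
    filter_upwards [hopen, hev] with c hc0 hcb
    by_contra hle
    push_neg at hle
    obtain ⟨hTc, hNTc⟩ := Tfun_pos hc0
    have hb0 : (0:ℝ) < b := hT0.trans hb
    have := Nfun_monotoneOn n c (Set.mem_Ici.2 hb0.le) (Set.mem_Ici.2 hTc.le) hle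
    rw [hNTc] at this
    linarith
open Finset Polynomial

private lemma esF_smul (n : ℕ) (s : ℂ) (z : Fin n → ℂ) (k : Fin n) :
    esF n (fun i => s * z i) k = s ^ (k.1 + 1) * esF n z k := by
  unfold esF
  rw [Finset.mul_sum]
  refine Finset.sum_congr rfl fun t ht => ?_
  have hcard : t.card = k.1 + 1 := (Finset.mem_powersetCard_univ.1 ht)
  rw [Finset.prod_mul_distrib, Finset.prod_const, hcard]

private lemma esF_zero (n : ℕ) (k : Fin n) : esF n (fun _ => (0:ℂ)) k = 0 := by
  unfold esF
  refine Finset.sum_eq_zero fun t ht => ?_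
  have hcard : t.card = k.1 + 1 := (Finset.mem_powersetCard_univ.1 ht)
  obtain ⟨i, hi⟩ := Finset.card_pos.1 (by omega : 0 < t.card)
  exact Finset.prod_eq_zero hi rfl

private lemma sum_norm_sq_eq_one {n : ℕ} {z : EuclideanSpace ℂ (Fin n)} (hz : ‖z‖ = 1) :
    ∑ i : Fin n, ‖z i‖ ^ 2 = 1 := by
  have h := EuclideanSpace.norm_eq z
  rw [hz] at h
  have h2 : Real.sqrt (∑ i : Fin n, ‖z i‖ ^ 2) = 1 := h.symm
  have h3 : (0:ℝ) ≤ ∑ i : Fin n, ‖z i‖ ^ 2 := Finset.sum_nonneg fun i _ => sq_nonneg _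
  nlinarith [Real.sq_sqrt h3]

private lemma esF_ne_zero {n : ℕ} {z : EuclideanSpace ℂ (Fin n)} (hz : ‖z‖ = 1) :
    esF n z ≠ 0 := by
  intro h0
  have h : ∀ k : Fin n, esF n z k = esF n (fun _ => (0:ℂ)) k := by
    intro k; rw [esF_zero, congrFun h0 k]; rfl
  obtain ⟨σ, hσ⟩ := exists_perm_of_esF_eq h
  have hzz : z = 0 := by
    ext i
    have := hσ (σ.symm i)
    rw [Equiv.apply_symm_apply] at this
    exact this.symm
  rw [hzz, norm_zero] at hz
  norm_num at hz

private noncomputable def fmap (n : ℕ) (z : EuclideanSpace ℂ (Fin n)) :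
    EuclideanSpace ℂ (Fin n) :=
  WithLp.toLp 2 (fun k => ((Tfun n (esF n z) : ℝ) : ℂ) ^ (k.1 + 1) * esF n z k)

private lemma norm_fmap {n : ℕ} {z : EuclideanSpace ℂ (Fin n)} (hz : ‖z‖ = 1) :
    ‖fmap n z‖ = 1 := by
  obtain ⟨hT, hNT⟩ := Tfun_pos (esF_ne_zero hz)
  set T := Tfun n (esF n z) with hTdef
  rw [EuclideanSpace.norm_eq]
  have hsum : ∑ i : Fin n, ‖fmap n z i‖ ^ 2 = 1 := by
    rw [← hNT]
    refine Finset.sum_congr rfl fun k _ => ?_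
    show ‖((T:ℂ)) ^ (k.1 + 1) * esF n z k‖ ^ 2 = T ^ (2 * (k.1 + 1)) * ‖esF n z k‖ ^ 2
    rw [norm_mul, norm_pow, Complex.norm_real, Real.norm_eq_abs, abs_of_pos hT, mul_pow,
      ← pow_mul, Nat.mul_comm]
  rw [hsum, Real.sqrt_one]

private lemma esF_perm {n : ℕ} {z w : Fin n → ℂ} (σ : Equiv.Perm (Fin n))
    (h : ∀ i, w i = z (σ i)) (k : Fin n) : esF n w k = esF n z k := by
  rw [esF_eq_esymm, esF_eq_esymm]
  congr 1
  have : w = fun i => z (σ i) := funext h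
  rw [this]
  exact map_univ_perm z σ

private lemma fmap_inj {n : ℕ} {z w : EuclideanSpace ℂ (Fin n)} (hz : ‖z‖ = 1) (hw : ‖w‖ = 1)
    (h : fmap n z = fmap n w) : ∃ σ : Equiv.Perm (Fin n), ∀ i, w i = z (σ i) := by
  have hcz := esF_ne_zero hz
  have hcw := esF_ne_zero hw
  obtain ⟨hTz, hNz⟩ := Tfun_pos hcz
  obtain ⟨hTw, hNw⟩ := Tfun_pos hcw
  set tz := Tfun n (esF n z) with htz
  set tw := Tfun n (esF n w) with htw
  have hk : ∀ k : Fin n, ((tz:ℂ)) ^ (k.1+1) * esF n z k = ((tw:ℂ)) ^ (k.1+1) * esF n w k :=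
    fun k => congrFun (congrArg WithLp.ofLp h) k
  set s : ℝ := tz / tw with hs
  have hs0 : 0 < s := div_pos hTz hTw
  have htwC : ((tw:ℝ):ℂ) ≠ 0 := by
    simp only [ne_eq, Complex.ofReal_eq_zero]
    exact ne_of_gt hTw
  have hES : ∀ k : Fin n, esF n (fun i => ((s:ℝ):ℂ) * z i) k = esF n w k := by
    intro k
    rw [esF_smul]
    have hsC : ((s:ℝ):ℂ) = (tz:ℂ) / (tw:ℂ) := by push_cast [hs]; ring
    rw [hsC, div_pow, div_mul_eq_mul_div, hk k, mul_div_assoc]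
    field_simp
  obtain ⟨σ, hσ⟩ := exists_perm_of_esF_eq hES
  -- hσ : ∀ i, w i = s * z (σ i)
  have hnormv : ‖w‖ = s * ‖z‖ := by
    have hweq : w = ((s:ℝ):ℂ) • (WithLp.toLp 2 (fun i => z (σ i) : Fin n → ℂ) : EuclideanSpace ℂ (Fin n)) := by
      ext i
      exact hσ i
    rw [hweq, norm_smul]
    have : ‖((s:ℝ):ℂ)‖ = s := by
      rw [Complex.norm_real, Real.norm_eq_abs, abs_of_pos hs0]
    rw [this]
    congr 1
    rw [EuclideanSpace.norm_eq, EuclideanSpace.norm_eq]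
    congr 1
    exact Equiv.sum_comp σ (fun i => ‖z i‖ ^ 2)
  rw [hz, hw, mul_one] at hnormv
  have hs1 : s = 1 := hnormv.symm
  refine ⟨σ, fun i => ?_⟩
  have := hσ i
  rw [hs1] at this
  simpa using this

private lemma exists_esF_eq (n : ℕ) (a : Fin n → ℂ) :
    ∃ z : Fin n → ℂ, ∀ k : Fin n, esF n z k = a k := by
  rcases Nat.eq_zero_or_pos n with hn | hn
  · subst hn; exact ⟨fun i => i.elim0, fun k => k.elim0⟩
  classical
  set q : Polynomial ℂ :=
    ∑ k : Fin n, Polynomial.C ((-1) ^ (k.1 + 1) * a k) * Polynomial.X ^ (n - (k.1 + 1)) with hq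
  have hqdeg : q.degree < (n : ℕ) := by
    apply lt_of_le_of_lt (Polynomial.degree_sum_le _ _)
    rw [Finset.sup_lt_iff (by exact_mod_cast WithBot.bot_lt_coe (n:ℕ))]
    intro k _
    apply lt_of_le_of_lt (Polynomial.degree_C_mul_X_pow_le _ _)
    exact_mod_cast (by omega : n - (k.1 + 1) < n)
  set p := Polynomial.X ^ n + q with hp
  have hmonic : p.Monic := Polynomial.monic_X_pow_add hqdeg
  have hdeg : p.degree = n := by
    rw [hp, Polynomial.degree_add_eq_left_of_degree_lt, Polynomial.degree_X_pow]
    rw [Polynomial.degree_X_pow]; exact hqdeg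
  have hndeg : p.natDegree = n := Polynomial.natDegree_eq_of_degree_eq_some hdeg
  have hcard : Multiset.card p.roots = n := by
    rw [← hndeg]
    exact Polynomial.splits_iff_card_roots.1 (IsAlgClosed.splits p)
  set l := p.roots.toList with hl
  have hlen : l.length = n := by rw [hl, Multiset.length_toList, hcard]
  set z : Fin n → ℂ := fun i => l.get (Fin.cast hlen.symm i) with hz
  have hofn : List.ofFn z = l := by
    apply List.ext_getElem
    · simp [hlen]
    · intro i h1 h2
      simp [hz]
  have hmapz : Multiset.map z Finset.univ.val = p.roots := by
    rw [Fin.univ_val_map, hofn, hl, Multiset.coe_toList]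
  -- coefficient computation
  have hcoeff : ∀ k : Fin n, p.coeff (n - (k.1 + 1)) = (-1) ^ (k.1 + 1) * a k := by
    intro k
    have hkn : k.1 + 1 ≤ n := k.2
    rw [hp, Polynomial.coeff_add, Polynomial.coeff_X_pow, if_neg (by omega : ¬ n - (k.1+1) = n)]
    rw [hq, Polynomial.finset_sum_coeff]
    rw [Finset.sum_eq_single k]
    · rw [Polynomial.coeff_C_mul, Polynomial.coeff_X_pow, if_pos rfl, mul_one, zero_add]
    · intro j _ hj
      rw [Polynomial.coeff_C_mul, Polynomial.coeff_X_pow, if_neg, mul_zero]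
      intro hjk
      exact hj (Fin.ext (by omega : j.1 = k.1))
    · intro h; exact absurd (Finset.mem_univ k) h
  refine ⟨z, fun k => ?_⟩
  have hkn : k.1 + 1 ≤ n := k.2
  have hv := Polynomial.coeff_eq_esymm_roots_of_card
    (by rw [hndeg]; exact hcard) (p := p) (k := n - (k.1 + 1)) (by omega)
  rw [hmonic.leadingCoeff, one_mul, hndeg] at hv
  have he : n - (n - (k.1 + 1)) = k.1 + 1 := by omega
  rw [he, hcoeff k] at hv
  rw [esF_eq_esymm, hmapz]
  -- hv : (-1)^(k+1) * a k = (-1)^(k+1) * esymm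
  have := mul_left_cancel₀ (a := ((-1 : ℂ)) ^ (k.1 + 1)) (by
    apply pow_ne_zero; norm_num) hv
  exact this.symm

private lemma fmap_surj {n : ℕ} (u : EuclideanSpace ℂ (Fin n)) (hu : ‖u‖ = 1) :
    ∃ z : EuclideanSpace ℂ (Fin n), ‖z‖ = 1 ∧ fmap n z = u := by
  obtain ⟨z0, hz0⟩ := exists_esF_eq n u
  set Z0 : EuclideanSpace ℂ (Fin n) := WithLp.toLp 2 z0 with hZ0
  have hz0ne : Z0 ≠ 0 := by
    intro h0
    have hu0 : ∀ k : Fin n, u k = 0 := by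
      intro k
      rw [← hz0 k]
      have h1 : esF n Z0 k = esF n (fun _ => (0:ℂ)) k := by
        rw [h0]; rfl
      rw [h1, esF_zero]
    have : u = 0 := by ext k; exact hu0 k
    rw [this, norm_zero] at hu
    norm_num at hu
  set s : ℝ := ‖Z0‖ with hs
  have hspos : 0 < s := norm_pos_iff.2 hz0ne
  set z : EuclideanSpace ℂ (Fin n) := (((s⁻¹ : ℝ) : ℂ)) • Z0 with hzdef
  have hznorm : ‖z‖ = 1 := by
    rw [hzdef, norm_smul, Complex.norm_real, Real.norm_eq_abs,
      abs_of_pos (inv_pos.2 hspos), ← hs, inv_mul_cancel₀ (ne_of_gt hspos)]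
  have hesz : ∀ k : Fin n, esF n z k = (((s : ℝ) : ℂ))⁻¹ ^ (k.1 + 1) * u k := by
    intro k
    have : esF n z k = esF n (fun i => (((s⁻¹ : ℝ) : ℂ)) * z0 i) k := rfl
    rw [this, esF_smul, hz0 k, Complex.ofReal_inv]
  have hsC : ((s : ℝ) : ℂ) ≠ 0 := by
    simp only [ne_eq, Complex.ofReal_eq_zero]; exact ne_of_gt hspos
  have hNs : Nfun n (esF n z) s = 1 := by
    unfold Nfun
    have : ∀ k : Fin n, s ^ (2 * (k.1 + 1)) * ‖esF n z k‖ ^ 2 = ‖u k‖ ^ 2 := by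
      intro k
      rw [hesz k]
      rw [norm_mul, norm_pow, norm_inv, Complex.norm_real, Real.norm_eq_abs, abs_of_pos hspos]
      rw [mul_pow, ← pow_mul, ← mul_assoc]
      rw [Nat.mul_comm (k.1 + 1) 2, ← mul_pow, mul_inv_cancel₀ (ne_of_gt hspos), one_pow, one_mul]
    rw [Finset.sum_congr rfl fun k _ => this k]
    exact sum_norm_sq_eq_one hu
  have hT : Tfun n (esF n z) = s := Tfun_unique (esF_ne_zero hznorm) hspos hNs
  refine ⟨z, hznorm, ?_⟩
  ext k
  show (((Tfun n (esF n z) : ℝ)) : ℂ) ^ (k.1 + 1) * esF n z k = u k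
  rw [hT, hesz k, ← mul_assoc, ← mul_pow, mul_inv_cancel₀ hsC, one_pow, one_mul]

private lemma continuous_esF (n : ℕ) :
    Continuous (fun z : EuclideanSpace ℂ (Fin n) => esF n z) := by
  apply continuous_pi
  intro k
  unfold esF
  apply continuous_finset_sum
  intro t _
  apply continuous_finset_prod
  intro i _
  exact (EuclideanSpace.proj i).continuous

private lemma continuousAt_fmap {n : ℕ} {z : EuclideanSpace ℂ (Fin n)} (hz : ‖z‖ = 1) :
    ContinuousAt (fmap n) z := by
  have hc := continuous_esF n
  have hT : ContinuousAt (fun y : EuclideanSpace ℂ (Fin n) => Tfun n (esF n y)) z :=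
    (Tfun_continuousAt (esF_ne_zero hz)).comp (f := fun y : EuclideanSpace ℂ (Fin n) => esF n y) hc.continuousAt
  have hpi : ContinuousAt
      (fun y : EuclideanSpace ℂ (Fin n) =>
        (fun k : Fin n => ((Tfun n (esF n y) : ℝ) : ℂ) ^ (k.1 + 1) * esF n y k)) z := by
    rw [continuousAt_pi]
    intro k
    exact ((Complex.continuous_ofReal.continuousAt.comp hT).pow (k.1 + 1)).mul
      (((continuous_apply k).comp hc).continuousAt)
  exact (PiLp.continuous_toLp 2 (fun _ : Fin n => ℂ)).continuousAt.comp hpi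

/-- The quotient of the unit sphere `S^{2n-1} ⊆ ℂ^n` by the action of the
symmetric group `S_n` permuting the coordinates is homeomorphic to `S^{2n-1}`. -/
theorem stmt_0 (n : ℕ) (hn : 1 ≤ n) :
    Nonempty
      (Quot (fun x y : Metric.sphere (0 : EuclideanSpace ℂ (Fin n)) 1 =>
          ∃ σ : Equiv.Perm (Fin n), ∀ i : Fin n,
            (y : EuclideanSpace ℂ (Fin n)) i = (x : EuclideanSpace ℂ (Fin n)) (σ i)) ≃ₜ
        Metric.sphere (0 : EuclideanSpace ℂ (Fin n)) 1) := by
  classical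
  set S := Metric.sphere (0 : EuclideanSpace ℂ (Fin n)) 1 with hS
  set r : S → S → Prop := fun x y =>
    ∃ σ : Equiv.Perm (Fin n), ∀ i : Fin n,
      (y : EuclideanSpace ℂ (Fin n)) i = (x : EuclideanSpace ℂ (Fin n)) (σ i) with hr
  have hnorm : ∀ z : S, ‖(z : EuclideanSpace ℂ (Fin n))‖ = 1 := fun z =>
    mem_sphere_zero_iff_norm.1 z.2
  have hmem : ∀ z : S, fmap n (z : EuclideanSpace ℂ (Fin n)) ∈ S := fun z =>
    mem_sphere_zero_iff_norm.2 (norm_fmap (hnorm z))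
  set F0 : S → S := fun z => ⟨fmap n (z : EuclideanSpace ℂ (Fin n)), hmem z⟩ with hF0
  have hresp : ∀ x y : S, r x y → F0 x = F0 y := by
    rintro x y ⟨σ, hσ⟩
    apply Subtype.ext
    show fmap n (x : EuclideanSpace ℂ (Fin n)) = fmap n (y : EuclideanSpace ℂ (Fin n))
    have hes : ∀ k : Fin n, esF n (y : EuclideanSpace ℂ (Fin n)) k
        = esF n (x : EuclideanSpace ℂ (Fin n)) k := esF_perm σ hσ
    have hesf : esF n (y : EuclideanSpace ℂ (Fin n)) = esF n (x : EuclideanSpace ℂ (Fin n)) :=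
      funext hes
    show WithLp.toLp 2 (fun k : Fin n => ((Tfun n (esF n (x : EuclideanSpace ℂ (Fin n))) : ℝ) : ℂ) ^ (k.1 + 1)
        * esF n (x : EuclideanSpace ℂ (Fin n)) k)
      = WithLp.toLp 2 (fun k : Fin n => ((Tfun n (esF n (y : EuclideanSpace ℂ (Fin n))) : ℝ) : ℂ) ^ (k.1 + 1)
        * esF n (y : EuclideanSpace ℂ (Fin n)) k)
    rw [hesf]
  have hcont0 : Continuous F0 := by
    apply Continuous.subtype_mk
    rw [continuous_iff_continuousAt]
    intro z
    exact (continuousAt_fmap (hnorm z)).comp continuous_subtype_val.continuousAt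
  set F : Quot r → S := Quot.lift F0 hresp with hF
  have hcont : Continuous F := continuous_quot_lift hresp hcont0
  have hinj : Function.Injective F := by
    intro x y
    induction x using Quot.ind with | _ a =>
    induction y using Quot.ind with | _ b =>
    intro hab
    rw [hF] at hab
    have hab' : F0 a = F0 b := hab
    have : fmap n (a : EuclideanSpace ℂ (Fin n)) = fmap n (b : EuclideanSpace ℂ (Fin n)) :=
      Subtype.ext_iff.1 hab'
    obtain ⟨σ, hσ⟩ := fmap_inj (hnorm a) (hnorm b) this
    exact Quot.sound ⟨σ, hσ⟩
  have hsurj : Function.Surjective F := by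
    intro u
    obtain ⟨z, hz1, hz2⟩ := fmap_surj (u : EuclideanSpace ℂ (Fin n)) (hnorm u)
    refine ⟨Quot.mk r ⟨z, mem_sphere_zero_iff_norm.2 hz1⟩, ?_⟩
    rw [hF]
    exact Subtype.ext hz2
  have hbij : Function.Bijective F := ⟨hinj, hsurj⟩
  let E : Quot r ≃ S := Equiv.ofBijective F hbij
  have hcontE : Continuous (E : Quot r → S) := hcont
  exact ⟨Continuous.homeoOfEquivCompactToT2 (f := E) hcontE⟩
end

section
/- Let (K, |·|) be a non-Archimedean field and fix a real number r ∈ (0,1). On the set K_r of bi-infinite formal series Σ_{j∈ℤ} a_j ϖ^j with a_j ∈ K such that |a_j| r^j → 0 as |j| → ∞, the Gauss norm |Σ a_j ϖ^j|_r := max_j |a_j| r^j is a multiplicative non-Archimedean norm, i.e. it satisfies |x·y|_r = |x|_r · |y|_r and |x + y|_r ≤ max(|x|_r, |y|_r) for all x,y ∈ K_r. -/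
/-!
The ultrametric inequality holds coefficientwise, and `|xy|_r ≤ |x|_r |y|_r` holds termwise in the
Cauchy product. For the reverse inequality let `i` and `k` be the least indices at which
`‖a_j‖ r^j` and `‖b_j‖ r^j` attain their maxima. In the coefficient of `ϖ^(i+k)` every term
`a_p b_q` other than `a_i b_k` has `p < i` or `q < k`, hence is strictly smaller than `a_i b_k`,
and in an ultrametric field a strictly dominant term determines the norm of the sum.
-/

open Filter Topology

section Cofinite

variable {ι : Type*} {f : ι → ℝ}

theorem finite_setOf_le_of_tendsto_cofinite_zero (hf : Tendsto f cofinite (𝓝 0)) {c : ℝ}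
    (hc : 0 < c) : {i | c ≤ f i}.Finite := by
  simpa only [not_lt] using eventually_cofinite.mp (hf.eventually_lt_const hc)

theorem exists_forall_le_of_tendsto_cofinite_zero [Nonempty ι] (hf : Tendsto f cofinite (𝓝 0))
    (hf0 : ∀ i, 0 ≤ f i) : ∃ i, ∀ j, f j ≤ f i := by
  by_cases! hpos : ∃ i₀, 0 < f i₀
  · obtain ⟨i₀, hi₀⟩ := hpos
    obtain ⟨i, -, hmax⟩ := Set.exists_max_image _ f
      (finite_setOf_le_of_tendsto_cofinite_zero hf hi₀) ⟨i₀, le_refl (f i₀)⟩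
    refine ⟨i, fun j => ?_⟩
    rcases le_or_gt (f i₀) (f j) with hj | hj
    · exact hmax j hj
    · exact hj.le.trans (hmax i₀ (le_refl (f i₀)))
  · obtain ⟨i⟩ := ‹Nonempty ι›
    exact ⟨i, fun j => (hpos j).trans (hf0 i)⟩

theorem exists_least_eq_of_tendsto_cofinite_zero [LinearOrder ι] (hf : Tendsto f cofinite (𝓝 0))
    {i₁ : ι} (hmax : ∀ j, f j ≤ f i₁) (hpos : 0 < f i₁) :
    ∃ i, f i = f i₁ ∧ ∀ j < i, f j < f i₁ := by
  obtain ⟨i, hi, hmin⟩ := Set.exists_min_image _ id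
    (finite_setOf_le_of_tendsto_cofinite_zero hf hpos) ⟨i₁, le_refl (f i₁)⟩
  exact ⟨i, (hmax i).antisymm hi, fun j hj => not_le.mp fun h => (hmin j h).not_gt hj⟩

end Cofinite

section Ultrametric

variable {ι E : Type*} [NormedAddCommGroup E] [IsUltrametricDist E] {t : ι → E}

theorem norm_tsum_lt_of_forall_norm_lt [Nonempty ι] (ht : Tendsto t cofinite (𝓝 0)) {C : ℝ}
    (h : ∀ i, ‖t i‖ < C) : ‖∑' i, t i‖ < C := by
  obtain ⟨q, hq⟩ := exists_forall_le_of_tendsto_cofinite_zero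
    (tendsto_zero_iff_norm_tendsto_zero.mp ht) fun i => norm_nonneg (t i)
  exact (IsUltrametricDist.norm_tsum_le_of_forall_le hq).trans_lt (h q)

theorem norm_tsum_eq_of_forall_ne_norm_lt [CompleteSpace E] (ht : Tendsto t cofinite (𝓝 0))
    (i₀ : ι) (h : ∀ i ≠ i₀, ‖t i‖ < ‖t i₀‖) : ‖∑' i, t i‖ = ‖t i₀‖ := by
  classical
  rcases eq_or_ne (t i₀) 0 with h0 | h0
  · rw [tsum_eq_single i₀ fun i hi => absurd (h i hi) (by simp [h0])]
  set u : ι → E := fun i => if i = i₀ then 0 else t i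
  have hu : Tendsto u cofinite (𝓝 0) :=
    ht.congr' ((eventually_cofinite_ne i₀).mono fun i hi => (if_neg hi).symm)
  have hu_lt : ∀ i, ‖u i‖ < ‖t i₀‖ := by
    intro i
    by_cases hi : i = i₀
    · simpa [u, hi] using h0
    · simpa [u, hi] using h i hi
  have : Nonempty ι := ⟨i₀⟩
  have hrest : ‖∑' i, u i‖ < ‖t i₀‖ := norm_tsum_lt_of_forall_norm_lt hu hu_lt
  rw [(NonarchimedeanAddGroup.summable_of_tendsto_cofinite_zero ht).tsum_eq_add_tsum_ite i₀,
    IsUltrametricDist.norm_add_eq_max_of_norm_ne_norm hrest.ne', max_eq_left hrest.le]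

end Ultrametric

section GaussNorm

variable {K : Type*} [NormedField K]

noncomputable def gaussNorm (r : ℝ) (a : ℤ → K) : ℝ :=
  ⨆ j, ‖a j‖ * r ^ j

noncomputable def seriesMul (a b : ℤ → K) (m : ℤ) : K :=
  ∑' p : {p : ℤ × ℤ // p.1 + p.2 = m}, a p.val.1 * b p.val.2

variable {r : ℝ} {a b : ℤ → K}

theorem le_gaussNorm (ha : Tendsto (fun j => ‖a j‖ * r ^ j) cofinite (𝓝 0)) (j : ℤ) :
    ‖a j‖ * r ^ j ≤ gaussNorm r a :=
  le_ciSup ha.bddAbove_range_of_cofinite j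

theorem gaussNorm_nonneg (hr : 0 ≤ r) (a : ℤ → K) : 0 ≤ gaussNorm r a :=
  Real.iSup_nonneg fun j => mul_nonneg (norm_nonneg _) (zpow_nonneg hr j)

theorem gaussNorm_add_le [IsUltrametricDist K] (hr : 0 ≤ r)
    (ha : Tendsto (fun j => ‖a j‖ * r ^ j) cofinite (𝓝 0))
    (hb : Tendsto (fun j => ‖b j‖ * r ^ j) cofinite (𝓝 0)) :
    gaussNorm r (a + b) ≤ max (gaussNorm r a) (gaussNorm r b) := by
  refine ciSup_le fun j => ?_
  calc ‖a j + b j‖ * r ^ j ≤ max ‖a j‖ ‖b j‖ * r ^ j :=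
        mul_le_mul_of_nonneg_right (IsUltrametricDist.norm_add_le_max _ _) (zpow_nonneg hr j)
    _ = max (‖a j‖ * r ^ j) (‖b j‖ * r ^ j) := max_mul_of_nonneg _ _ (zpow_nonneg hr j)
    _ ≤ max (gaussNorm r a) (gaussNorm r b) := max_le_max (le_gaussNorm ha j) (le_gaussNorm hb j)

theorem exists_least_eq_gaussNorm (hr : 0 ≤ r)
    (ha : Tendsto (fun j => ‖a j‖ * r ^ j) cofinite (𝓝 0)) (hA : 0 < gaussNorm r a) :
    ∃ i, ‖a i‖ * r ^ i = gaussNorm r a ∧ ∀ j < i, ‖a j‖ * r ^ j < gaussNorm r a := by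
  obtain ⟨i₁, hi₁⟩ := exists_forall_le_of_tendsto_cofinite_zero ha
    fun j => mul_nonneg (norm_nonneg (a j)) (zpow_nonneg hr j)
  have hmax : ‖a i₁‖ * r ^ i₁ = gaussNorm r a := (le_gaussNorm ha i₁).antisymm (ciSup_le hi₁)
  rw [← hmax] at hA ⊢
  exact exists_least_eq_of_tendsto_cofinite_zero ha hi₁ hA

theorem norm_mul_mul_zpow_of_add_eq (hr : r ≠ 0) {i k m : ℤ} (h : i + k = m) :
    ‖a i * b k‖ * r ^ m = (‖a i‖ * r ^ i) * (‖b k‖ * r ^ k) := by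
  rw [← h, norm_mul, zpow_add₀ hr]
  ring

theorem norm_seriesMul_mul_zpow_le [IsUltrametricDist K] (hr : 0 < r)
    (ha : Tendsto (fun j => ‖a j‖ * r ^ j) cofinite (𝓝 0))
    (hb : Tendsto (fun j => ‖b j‖ * r ^ j) cofinite (𝓝 0)) (m : ℤ) :
    ‖seriesMul a b m‖ * r ^ m ≤ gaussNorm r a * gaussNorm r b := by
  have hrm : 0 < r ^ m := zpow_pos hr m
  rw [← le_div_iff₀ hrm]
  refine IsUltrametricDist.norm_tsum_le_of_forall_le_of_nonneg
    (div_nonneg (mul_nonneg (gaussNorm_nonneg hr.le a) (gaussNorm_nonneg hr.le b)) hrm.le)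
    fun p => ?_
  rw [le_div_iff₀ hrm, norm_mul_mul_zpow_of_add_eq hr.ne' p.prop]
  exact mul_le_mul (le_gaussNorm ha _) (le_gaussNorm hb _)
    (mul_nonneg (norm_nonneg _) (zpow_nonneg hr.le _)) (gaussNorm_nonneg hr.le a)

theorem tendsto_seriesMul_terms (hr : 0 < r)
    (ha : Tendsto (fun j => ‖a j‖ * r ^ j) cofinite (𝓝 0))
    (hb : Tendsto (fun j => ‖b j‖ * r ^ j) cofinite (𝓝 0)) (m : ℤ) :
    Tendsto (fun p : {p : ℤ × ℤ // p.1 + p.2 = m} => a p.val.1 * b p.val.2) cofinite (𝓝 0) := by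
  have hfst : Function.Injective fun p : {p : ℤ × ℤ // p.1 + p.2 = m} => p.val.1 := by
    rintro ⟨⟨i, k⟩, hp⟩ ⟨⟨i', k'⟩, hp'⟩ (rfl : i = i')
    obtain rfl : k = k' := by omega
    rfl
  have hbound := ((ha.comp hfst.tendsto_cofinite).mul_const (gaussNorm r b)).div_const (r ^ m)
  rw [zero_mul, zero_div] at hbound
  refine squeeze_zero_norm (fun p => ?_) hbound
  rw [le_div_iff₀ (zpow_pos hr m), norm_mul_mul_zpow_of_add_eq hr.ne' p.prop]
  exact mul_le_mul_of_nonneg_left (le_gaussNorm hb _)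
    (mul_nonneg (norm_nonneg _) (zpow_nonneg hr.le _))

theorem norm_seriesMul_mul_zpow_eq_of_least [IsUltrametricDist K] [CompleteSpace K] (hr : 0 < r)
    (ha : Tendsto (fun j => ‖a j‖ * r ^ j) cofinite (𝓝 0))
    (hb : Tendsto (fun j => ‖b j‖ * r ^ j) cofinite (𝓝 0))
    (hA : 0 < gaussNorm r a) (hB : 0 < gaussNorm r b) {i k : ℤ}
    (hi : ‖a i‖ * r ^ i = gaussNorm r a) (hi_lt : ∀ j < i, ‖a j‖ * r ^ j < gaussNorm r a)
    (hk : ‖b k‖ * r ^ k = gaussNorm r b) (hk_lt : ∀ j < k, ‖b j‖ * r ^ j < gaussNorm r b) :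
    ‖seriesMul a b (i + k)‖ * r ^ (i + k) = gaussNorm r a * gaussNorm r b := by
  have hrm := zpow_pos hr (i + k)
  have hdom : ∀ p : {p : ℤ × ℤ // p.1 + p.2 = i + k}, p ≠ ⟨(i, k), rfl⟩ →
      ‖a p.val.1 * b p.val.2‖ < ‖a i * b k‖ := by
    rintro ⟨⟨p, q⟩, hpq⟩ hne
    rw [← mul_lt_mul_iff_left₀ hrm, norm_mul_mul_zpow_of_add_eq hr.ne' hpq,
      norm_mul_mul_zpow_of_add_eq hr.ne' rfl, hi, hk]
    rcases lt_or_ge p i with hp | hp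
    · exact (mul_le_mul_of_nonneg_left (le_gaussNorm hb q)
        (mul_nonneg (norm_nonneg _) (zpow_nonneg hr.le _))).trans_lt
        (mul_lt_mul_of_pos_right (hi_lt p hp) hB)
    · have hq : q < k := by
        by_contra! hq
        exact hne (by congr <;> omega)
      exact mul_lt_mul' (le_gaussNorm ha p) (hk_lt q hq)
        (mul_nonneg (norm_nonneg _) (zpow_nonneg hr.le _)) hA
  rw [seriesMul, norm_tsum_eq_of_forall_ne_norm_lt (tendsto_seriesMul_terms hr ha hb _) _ hdom,
    norm_mul_mul_zpow_of_add_eq hr.ne' rfl, hi, hk]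

theorem gaussNorm_seriesMul [IsUltrametricDist K] [CompleteSpace K] (hr : 0 < r)
    (ha : Tendsto (fun j => ‖a j‖ * r ^ j) cofinite (𝓝 0))
    (hb : Tendsto (fun j => ‖b j‖ * r ^ j) cofinite (𝓝 0)) :
    gaussNorm r (seriesMul a b) = gaussNorm r a * gaussNorm r b := by
  have hle := norm_seriesMul_mul_zpow_le hr ha hb
  refine (ciSup_le hle).antisymm ?_
  rcases (mul_nonneg (gaussNorm_nonneg hr.le a) (gaussNorm_nonneg hr.le b)).eq_or_lt with h0 | hpos
  · exact h0 ▸ gaussNorm_nonneg hr.le _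
  have hA : 0 < gaussNorm r a :=
    (gaussNorm_nonneg hr.le a).lt_of_ne fun h => by simp [← h] at hpos
  have hB : 0 < gaussNorm r b :=
    (gaussNorm_nonneg hr.le b).lt_of_ne fun h => by simp [← h] at hpos
  obtain ⟨i, hi, hi_lt⟩ := exists_least_eq_gaussNorm hr.le ha hA
  obtain ⟨k, hk, hk_lt⟩ := exists_least_eq_gaussNorm hr.le hb hB
  rw [← norm_seriesMul_mul_zpow_eq_of_least hr ha hb hA hB hi hi_lt hk hk_lt]
  exact le_ciSup ⟨_, Set.forall_mem_range.mpr hle⟩ (i + k)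

end GaussNorm

theorem stmt_5_general {K : Type*} [NormedField K] [IsUltrametricDist K] [CompleteSpace K]
    (r : ℝ) (hr0 : 0 < r)
    (gauss : (ℤ → K) → ℝ)
    (hgauss : ∀ a : ℤ → K, gauss a = ⨆ j : ℤ, ‖a j‖ * r ^ j)
    (conv : (ℤ → K) → (ℤ → K) → ℤ → K)
    (hconv : ∀ (a b : ℤ → K) (m : ℤ),
      conv a b m = ∑' p : {p : ℤ × ℤ // p.1 + p.2 = m}, a p.val.1 * b p.val.2)
    (a b : ℤ → K)
    (ha : Filter.Tendsto (fun j : ℤ => ‖a j‖ * r ^ j) (Filter.cocompact ℤ) (nhds 0))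
    (hb : Filter.Tendsto (fun j : ℤ => ‖b j‖ * r ^ j) (Filter.cocompact ℤ) (nhds 0)) :
    gauss (conv a b) = gauss a * gauss b ∧
      gauss (a + b) ≤ max (gauss a) (gauss b) := by
  obtain rfl : gauss = gaussNorm r := funext hgauss
  obtain rfl : conv = seriesMul := funext₂ fun a b => funext (hconv a b)
  rw [cocompact_eq_cofinite] at ha hb
  exact ⟨gaussNorm_seriesMul hr0 ha hb, gaussNorm_add_le hr0.le ha hb⟩

/-- On the field of series `K_r` (bi-infinite series `Σ a_j ϖ^j` with
`‖a_j‖ r^j → 0` as `|j| → ∞`) over a non-Archimedean field `K`, the Gauss norm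
`|Σ a_j ϖ^j|_r = max_j ‖a_j‖ r^j` is multiplicative (for the Cauchy product) and
satisfies the ultrametric inequality. -/
theorem stmt_5 {K : Type*} [NormedField K] [IsUltrametricDist K] [CompleteSpace K]
    (r : ℝ) (hr0 : 0 < r) (hr1 : r < 1)
    (gauss : (ℤ → K) → ℝ)
    (hgauss : ∀ a : ℤ → K, gauss a = ⨆ j : ℤ, ‖a j‖ * r ^ j)
    (conv : (ℤ → K) → (ℤ → K) → ℤ → K)
    (hconv : ∀ (a b : ℤ → K) (m : ℤ),
      conv a b m = ∑' p : {p : ℤ × ℤ // p.1 + p.2 = m}, a p.val.1 * b p.val.2)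
    (a b : ℤ → K)
    (ha : Filter.Tendsto (fun j : ℤ => ‖a j‖ * r ^ j) (Filter.cocompact ℤ) (nhds 0))
    (hb : Filter.Tendsto (fun j : ℤ => ‖b j‖ * r ^ j) (Filter.cocompact ℤ) (nhds 0)) :
    gauss (conv a b) = gauss a * gauss b ∧
      gauss (a + b) ≤ max (gauss a) (gauss b) :=
  stmt_5_general r hr0 gauss hgauss conv hconv a b ha hb
end
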